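/- Let V ⊆ ℂⁿ be open, let Φ : V → ℝ be locally Lipschitz, and let V₁ ⋐ V be open. Then there exists C > 0 such that for every h ∈ (0,1] and every holomorphic u : V → ℂ, sup_{x ∈ V₁} |u(x)| e^{−Φ(x)/h} ≤ C h^{−n} ‖u‖_{L²_Φ(V)}. -/

import Mathlib

/-!
Along every complex line through `x` the function `u` is holomorphic, so `|u(x)|` is at most its
mean over a circle; averaging over the complex directions filling a ball (multiplication by a unit
complex number preserves Haar measure) gives the sub-mean value inequality
`|u(x)|² vol(B(x, ρ)) ≤ ∫_{B(x, ρ)} |u|²` for the holomorphic function `u²`. On a ball of radius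
`ρ = r h` the Lipschitz weight `e^{-2Φ/h}` varies by at most the factor `e^{2 M r}`, independent of
`h`, while `vol(B(x, r h)) ∼ h^{2n}`; taking square roots gives the factor `h^{-n}`. Compactness of
`closure V₁` provides a uniform radius `r` and Lipschitz constant `M`.
-/

open Complex MeasureTheory

noncomputable section

/-- `ℂⁿ` with its Euclidean (Hermitian) norm. -/
abbrev En (n : ℕ) := EuclideanSpace ℂ (Fin n)

instance (n : ℕ) : MeasurableSpace (En n) := borel _
instance (n : ℕ) : BorelSpace (En n) := ⟨rfl⟩
/-- The real inner product structure, giving Lebesgue measure (`volume`) on `ℂⁿ ≅ ℝ^{2n}`. -/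
instance (n : ℕ) : InnerProductSpace ℝ (En n) := InnerProductSpace.rclikeToReal ℂ (En n)

open Metric Real Set

theorem LocallyLipschitzOn.exists_cthickening_subset_lipschitzOnWith {α β : Type*}
    [PseudoMetricSpace α] [ProperSpace α] [PseudoMetricSpace β] {f : α → β} {V K : Set α}
    (hf : LocallyLipschitzOn V f) (hV : IsOpen V) (hK : IsCompact K) (hKV : K ⊆ V) :
    ∃ r > 0, cthickening r K ⊆ V ∧ ∃ M, LipschitzOnWith M f (cthickening r K) := by
  obtain ⟨r, hr, hsub⟩ := hK.exists_cthickening_subset_open hV hKV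
  exact ⟨r, hr, hsub, (hf.mono hsub).exists_lipschitzOnWith_of_compact hK.cthickening⟩

theorem LipschitzOnWith.exp_neg_two_mul_div_le {α : Type*} [PseudoMetricSpace α] {Φ : α → ℝ}
    {M : NNReal} {s : Set α} (hΦ : LipschitzOnWith M Φ s) {x y : α} (hx : x ∈ s) (hy : y ∈ s)
    {h : ℝ} (hh : 0 < h) :
    Real.exp (-(2 * Φ x) / h) ≤ Real.exp (2 * M * dist y x / h) * Real.exp (-(2 * Φ y) / h) := by
  rw [← Real.exp_add, Real.exp_le_exp, ← add_div, div_le_div_iff_of_pos_right hh]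
  have := (abs_sub_le_iff.1 ((Real.dist_eq _ _).symm.trans_le (hΦ.dist_le_mul y hy x hx))).1
  linarith

theorem ENNReal.le_mul_rpow_half_of_sq_le {a b c : ENNReal} (h : a ^ 2 ≤ b ^ 2 * c) :
    a ≤ b * c ^ (1 / 2 : ℝ) := by
  rwa [← ENNReal.pow_le_pow_left_iff two_ne_zero, mul_pow, ← ENNReal.rpow_natCast (c ^ _),
    ← ENNReal.rpow_mul, Nat.cast_ofNat, one_div_mul_cancel two_ne_zero, ENNReal.rpow_one]

section ComplexSubmean

variable {F : Type*} [NormedAddCommGroup F] [NormedSpace ℂ F] [CompleteSpace F]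

theorem DiffContOnCl.ofReal_two_pi_mul_enorm_le_lintegral {f : ℂ → F}
    (hf : DiffContOnCl ℂ f (ball 0 1)) :
    ENNReal.ofReal (2 * π) * ‖f 0‖ₑ ≤ ∫⁻ θ in Ioc 0 (2 * π), ‖f (circleMap 0 1 θ)‖ₑ := by
  have hmean : (2 * π) • f 0 = ∫ θ in Ioc 0 (2 * π), f (circleMap 0 1 θ) := by
    rw [← intervalIntegral.integral_of_le two_pi_pos.le,
      ← (by simpa using hf : DiffContOnCl ℂ f (ball 0 |1|)).circleAverage, circleAverage_def,
      smul_inv_smul₀ two_pi_pos.ne']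
  calc ENNReal.ofReal (2 * π) * ‖f 0‖ₑ = ‖(2 * π) • f 0‖ₑ := by
        rw [enorm_smul, Real.enorm_of_nonneg two_pi_pos.le]
    _ ≤ _ := hmean ▸ enorm_integral_le_lintegral_enorm _

variable {E : Type*} [NormedAddCommGroup E] [NormedSpace ℂ E] [FiniteDimensional ℂ E]
  [MeasurableSpace E] [BorelSpace E] (μ : Measure E) [μ.IsAddHaarMeasure]

theorem measurePreserving_smul_of_norm_eq_one {c : ℂ} (hc : ‖c‖ = 1) :
    MeasurePreserving (c • · : E → E) μ μ := by
  have : FiniteDimensional ℝ E := .complexToReal E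
  set f := (c • LinearMap.id : E →ₗ[ℂ] E).restrictScalars ℝ
  have hdet : LinearMap.det f = 1 := by
    rw [LinearMap.det_restrictScalars, LinearMap.det_smul, LinearMap.det_id, mul_one, map_pow,
      Algebra.norm_complex_apply, normSq_eq_norm_sq, hc, one_pow, one_pow]
  have hmap := Measure.map_linearMap_addHaar_eq_smul_addHaar μ (f := f) (by simp [hdet])
  rw [hdet, inv_one, abs_one, ENNReal.ofReal_one, one_smul] at hmap
  exact ⟨(continuous_const_smul c).measurable, hmap⟩

theorem setLIntegral_ball_comp_add_smul (g : E → ENNReal) (x : E) (r : ℝ) {c : ℂ} (hc : ‖c‖ = 1) :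
    ∫⁻ v in ball 0 r, g (x + c • v) ∂μ = ∫⁻ y in ball x r, g y ∂μ := by
  have hc0 : c ≠ 0 := norm_ne_zero_iff.1 (hc.trans_ne one_ne_zero)
  let e : E ≃ᵐ E := (MeasurableEquiv.smul₀ c hc0).trans (MeasurableEquiv.addLeft x)
  have he : MeasurePreserving e μ μ :=
    (measurePreserving_add_left μ x).comp (measurePreserving_smul_of_norm_eq_one μ hc)
  have hpre : e ⁻¹' ball x r = ball 0 r := by
    ext v
    simp [e, dist_eq_norm, norm_smul, hc]
  rw [← hpre]
  exact he.setLIntegral_comp_preimage_emb e.measurableEmbedding g _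

omit [FiniteDimensional ℂ E] [MeasurableSpace E] [BorelSpace E] in
theorem add_smul_mem_closedBall {x v : E} {r : ℝ} (hv : v ∈ closedBall 0 r) {z : ℂ}
    (hz : z ∈ closedBall 0 1) : x + z • v ∈ closedBall x r := by
  rw [mem_closedBall_zero_iff] at hv hz
  simpa [dist_eq_norm, norm_smul] using
    (mul_le_mul hz hv (norm_nonneg v) zero_le_one).trans_eq (one_mul r)

theorem DifferentiableOn.enorm_mul_measure_ball_le_setLIntegral {u : E → F} {x : E} {r : ℝ}
    (hu : DifferentiableOn ℂ u (closedBall x r)) :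
    ‖u x‖ₑ * μ (ball x r) ≤ ∫⁻ y in ball x r, ‖u y‖ₑ ∂μ := by
  have hslice : ∀ v ∈ closedBall (0 : E) r, ENNReal.ofReal (2 * π) * ‖u x‖ₑ ≤
      ∫⁻ θ in Ioc 0 (2 * π), ‖u (x + circleMap 0 1 θ • v)‖ₑ := by
    intro v hv
    have hd : DifferentiableOn ℂ (fun z : ℂ => u (x + z • v)) (closedBall 0 1) :=
      hu.comp (by fun_prop) fun z hz => add_smul_mem_closedBall hv hz
    simpa using DiffContOnCl.ofReal_two_pi_mul_enorm_le_lintegral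
      (hd.diffContOnCl_ball subset_rfl)
  have hmeas : AEMeasurable (Function.uncurry fun (v : E) (θ : ℝ) => ‖u (x + circleMap 0 1 θ • v)‖ₑ)
      ((μ.restrict (ball 0 r)).prod (volume.restrict (Ioc 0 (2 * π)))) := by
    rw [Measure.prod_restrict]
    refine ContinuousOn.aemeasurable ?_ (measurableSet_ball.prod measurableSet_Ioc)
    refine continuous_enorm.comp_continuousOn (hu.continuousOn.comp (by fun_prop) ?_)
    rintro ⟨v, θ⟩ ⟨hv, -⟩
    exact add_smul_mem_closedBall (ball_subset_closedBall hv) (by simp)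
  have h2π : ENNReal.ofReal (2 * π) ≠ 0 := (ENNReal.ofReal_pos.2 two_pi_pos).ne'
  refine (ENNReal.mul_le_mul_iff_right h2π ENNReal.ofReal_ne_top).1 ?_
  calc ENNReal.ofReal (2 * π) * (‖u x‖ₑ * μ (ball x r))
      = ∫⁻ _ in ball 0 r, ENNReal.ofReal (2 * π) * ‖u x‖ₑ ∂μ := by
        rw [Measure.addHaar_ball_center, setLIntegral_const, mul_assoc]
    _ ≤ ∫⁻ v in ball 0 r, (∫⁻ θ in Ioc 0 (2 * π), ‖u (x + circleMap 0 1 θ • v)‖ₑ) ∂μ :=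
        setLIntegral_mono' measurableSet_ball fun v hv => hslice v (ball_subset_closedBall hv)
    _ = ∫⁻ θ in Ioc 0 (2 * π), (∫⁻ v in ball 0 r, ‖u (x + circleMap 0 1 θ • v)‖ₑ ∂μ) :=
        lintegral_lintegral_swap hmeas
    _ = ∫⁻ _ in Ioc 0 (2 * π), (∫⁻ y in ball x r, ‖u y‖ₑ ∂μ) := by
        congr! 2 with θ
        exact setLIntegral_ball_comp_add_smul μ (‖u ·‖ₑ) x r (by simp [norm_circleMap_zero])
    _ = ENNReal.ofReal (2 * π) * ∫⁻ y in ball x r, ‖u y‖ₑ ∂μ := by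
        rw [setLIntegral_const, Real.volume_Ioc, sub_zero, mul_comm]

theorem DifferentiableOn.sq_mul_exp_mul_measure_ball_le {u : E → ℂ} {Φ : E → ℝ} {M : NNReal}
    {x : E} {ρ h : ℝ} (hu : DifferentiableOn ℂ u (closedBall x ρ))
    (hΦ : LipschitzOnWith M Φ (closedBall x ρ)) (hh : 0 < h) :
    ‖u x‖ₑ ^ 2 * ENNReal.ofReal (Real.exp (-(2 * Φ x) / h)) * μ (ball x ρ) ≤
      ENNReal.ofReal (Real.exp (2 * M * ρ / h)) *
        ∫⁻ y in ball x ρ, ‖u y‖ₑ ^ 2 * ENNReal.ofReal (Real.exp (-(2 * Φ y) / h)) ∂μ := by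
  have hweight : ∀ y ∈ ball x ρ, ENNReal.ofReal (Real.exp (-(2 * Φ x) / h)) ≤
      ENNReal.ofReal (Real.exp (2 * M * ρ / h)) * ENNReal.ofReal (Real.exp (-(2 * Φ y) / h)) := by
    intro y hy
    rw [← ENNReal.ofReal_mul (Real.exp_nonneg _)]
    refine ENNReal.ofReal_le_ofReal ((hΦ.exp_neg_two_mul_div_le (mem_closedBall_self ?_)
      (ball_subset_closedBall hy) hh).trans ?_)
    · exact dist_nonneg.trans (mem_ball.1 hy).le
    · gcongr
      exact (mem_ball.1 hy).le
  have hsub := (hu.pow 2).enorm_mul_measure_ball_le_setLIntegral μ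
  simp only [Pi.pow_apply, enorm_pow] at hsub
  calc ‖u x‖ₑ ^ 2 * ENNReal.ofReal (Real.exp (-(2 * Φ x) / h)) * μ (ball x ρ)
      = ENNReal.ofReal (Real.exp (-(2 * Φ x) / h)) * (‖u x‖ₑ ^ 2 * μ (ball x ρ)) := by ring
    _ ≤ ENNReal.ofReal (Real.exp (-(2 * Φ x) / h)) * ∫⁻ y in ball x ρ, ‖u y‖ₑ ^ 2 ∂μ := by gcongr
    _ = ∫⁻ y in ball x ρ, ENNReal.ofReal (Real.exp (-(2 * Φ x) / h)) * ‖u y‖ₑ ^ 2 ∂μ :=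
        (lintegral_const_mul' _ _ ENNReal.ofReal_ne_top).symm
    _ ≤ ∫⁻ y in ball x ρ, ENNReal.ofReal (Real.exp (2 * M * ρ / h)) *
          (‖u y‖ₑ ^ 2 * ENNReal.ofReal (Real.exp (-(2 * Φ y) / h))) ∂μ := by
        refine setLIntegral_mono' measurableSet_ball fun y hy => ?_
        rw [mul_left_comm, mul_comm]
        gcongr
        exact hweight y hy
    _ = _ := lintegral_const_mul' _ _ ENNReal.ofReal_ne_top

theorem exists_enorm_mul_exp_le_mul_lintegral_rpow_half {V K : Set E} {Φ : E → ℝ}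
    (hV : IsOpen V) (hΦ : LocallyLipschitzOn V Φ) (hK : IsCompact K) (hKV : K ⊆ V) :
    ∃ C : ℝ, 0 < C ∧ ∀ h ∈ Ioc (0 : ℝ) 1, ∀ u : E → ℂ, DifferentiableOn ℂ u V → ∀ x ∈ K,
      ‖u x‖ₑ * ENNReal.ofReal (Real.exp (-Φ x / h)) ≤
        ENNReal.ofReal (C * (h ^ Module.finrank ℂ E)⁻¹) *
          (∫⁻ y in V, ‖u y‖ₑ ^ 2 * ENNReal.ofReal (Real.exp (-(2 * Φ y) / h)) ∂μ) ^
            (1 / 2 : ℝ) := by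
  have : ProperSpace E := FiniteDimensional.proper ℂ E
  obtain ⟨r, hr, hrV, M, hM⟩ := hΦ.exists_cthickening_subset_lipschitzOnWith hV hK hKV
  set d := Module.finrank ℂ E
  set c := (μ (ball 0 1)).toReal
  have hc : 0 < c := ENNReal.toReal_pos (measure_ball_pos μ 0 one_pos).ne' measure_ball_lt_top.ne
  refine ⟨Real.exp (M * r) / (r ^ d * √c), by positivity, ?_⟩
  rintro h ⟨hh, hh1⟩ u hu x hx
  have hball : closedBall x (r * h) ⊆ cthickening r K :=
    (closedBall_subset_closedBall (mul_le_of_le_one_right hr.le hh1)).trans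
      (closedBall_subset_cthickening hx r)
  have hlocal := (hu.mono (hball.trans hrV)).sq_mul_exp_mul_measure_ball_le μ (hM.mono hball) hh
  have hvol : μ (ball x (r * h)) = ENNReal.ofReal ((r * h) ^ (2 * d) * c) := by
    rw [Measure.addHaar_ball_of_pos μ x (by positivity), ← finrank_real_of_complex,
      ENNReal.ofReal_mul (by positivity), ENNReal.ofReal_toReal measure_ball_lt_top.ne]
  have hconst : (Real.exp (M * r) / (r ^ d * √c) * (h ^ d)⁻¹) ^ 2 * ((r * h) ^ (2 * d) * c) =
      Real.exp (2 * M * (r * h) / h) := by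
    have hexp : Real.exp (2 * M * (r * h) / h) = Real.exp (M * r) ^ 2 := by
      rw [← Real.exp_nat_mul]; congr 1; field_simp; push_cast; ring
    rw [hexp]
    field_simp
    rw [Real.sq_sqrt hc.le]
    ring
  apply ENNReal.le_mul_rpow_half_of_sq_le
  refine (ENNReal.mul_le_mul_iff_left (measure_ball_pos μ x (r := r * h) (by positivity)).ne'
    measure_ball_lt_top.ne).1 ?_
  calc (‖u x‖ₑ * ENNReal.ofReal (Real.exp (-Φ x / h))) ^ 2 * μ (ball x (r * h))
      = ‖u x‖ₑ ^ 2 * ENNReal.ofReal (Real.exp (-(2 * Φ x) / h)) * μ (ball x (r * h)) := by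
        rw [mul_pow, ← ENNReal.ofReal_pow (Real.exp_nonneg _), ← Real.exp_nat_mul]
        ring_nf
    _ ≤ _ := hlocal
    _ ≤ ENNReal.ofReal (Real.exp (2 * M * (r * h) / h)) *
          ∫⁻ y in V, ‖u y‖ₑ ^ 2 * ENNReal.ofReal (Real.exp (-(2 * Φ y) / h)) ∂μ := by
        gcongr
        exact ball_subset_closedBall.trans (hball.trans hrV)
    _ = _ := by
        rw [hvol, ← hconst, ENNReal.ofReal_mul (by positivity), ENNReal.ofReal_pow (by positivity)]
        ring

end ComplexSubmean

theorem statement3 (n : ℕ)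
    (V : Set (En n)) (hV : IsOpen V)
    (Φ : En n → ℝ)
    (hΦ : ∀ x ∈ V, ∃ K : NNReal, ∃ t ∈ nhdsWithin x V, LipschitzOnWith K Φ t)
    (V₁ : Set (En n))
    (hV₁c : IsCompact (closure V₁)) (hV₁V : closure V₁ ⊆ V) :
    ∃ C : ℝ, 0 < C ∧ ∀ h ∈ Set.Ioc (0:ℝ) 1, ∀ u : En n → ℂ, DifferentiableOn ℂ u V →
      ∀ x ∈ V₁,
        ENNReal.ofReal (‖u x‖ * Real.exp (-(Φ x) / h))
          ≤ ENNReal.ofReal (C * (h ^ n)⁻¹) *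
            (∫⁻ y in V, ENNReal.ofReal (‖u y‖ ^ 2 * Real.exp (-(2 * Φ y) / h))) ^ (1/2 : ℝ) := by
  obtain ⟨C, hC, hbound⟩ :=
    exists_enorm_mul_exp_le_mul_lintegral_rpow_half volume hV hΦ hV₁c hV₁V
  refine ⟨C, hC, fun h hh u hu x hx => ?_⟩
  have hx' := hbound h hh u hu x (subset_closure hx)
  rw [finrank_euclideanSpace_fin] at hx'
  simp_rw [ENNReal.ofReal_mul (norm_nonneg _), ENNReal.ofReal_mul (sq_nonneg _),
    ENNReal.ofReal_pow (norm_nonneg _), ofReal_norm]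
  exact hx'

end
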